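/- arXiv:2307.05571 — 2 statements merged into one kernel-verified Lean document; each statement's English description precedes it below -/
import Mathlib

section
/- Let K be a nonarchimedean local field with ring of integers O, maximal ideal generated by a uniformizer ϖ, and normalized valuation e (with e(ϖ)=1). Let m ≥ 1. Suppose z ∈ K^×, y ∈ K^×, b ∈ K satisfy: the matrix z·[[y + αbyϖ^{-n}, (y + αbyϖ^{-n})βϖ^{-n} + αϖ^{-n}], [by, 1 + βbyϖ^{-n}]] lies in the subgroup K[m] = {g ∈ GL₂(O) : g₂₁ ∈ ϖ^m O} for some units α, β and some integer n with m ≥ n ≥ 1. Then e(z) = 0, e(y) = 0, and e(b) ≥ m. -/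
/-- Analysis of the support condition for the dual orbital integral at a ramified place:
if `z·M ∈ K[m]` where `M` is the displayed matrix, then `e(z)=0`, `e(y)=0`, `e(b) ≥ m`. -/
theorem dual_orbital_support (K : Type*) [Field K] (e : K → ℤ)
    (hmul : ∀ x y : K, x ≠ 0 → y ≠ 0 → e (x * y) = e x + e y)
    (hadd : ∀ x y : K, x ≠ 0 → y ≠ 0 → x + y ≠ 0 → min (e x) (e y) ≤ e (x + y))
    (ϖ : K) (hϖ0 : ϖ ≠ 0) (hϖ : e ϖ = 1)
    (m n : ℤ) (hn : 1 ≤ n) (hnm : n ≤ m)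
    (α β : K) (hα0 : α ≠ 0) (hα : e α = 0) (hβ0 : β ≠ 0) (hβ : e β = 0)
    (z y b : K) (hz : z ≠ 0) (hy : y ≠ 0)
    (g11 g12 g21 g22 : K)
    (h11 : g11 = z * (y + α * b * y * ϖ ^ (-n)))
    (h12 : g12 = z * ((y + α * b * y * ϖ ^ (-n)) * β * ϖ ^ (-n) + α * ϖ ^ (-n)))
    (h21 : g21 = z * (b * y))
    (h22 : g22 = z * (1 + β * b * y * ϖ ^ (-n)))
    (hO : ∀ x ∈ ({g11, g12, g21, g22} : Set K), x = 0 ∨ 0 ≤ e x)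
    (hdet0 : g11 * g22 - g12 * g21 ≠ 0)
    (hdet : e (g11 * g22 - g12 * g21) = 0)
    (h21m : g21 = 0 ∨ m ≤ e g21) :
    e z = 0 ∧ e y = 0 ∧ (b = 0 ∨ m ≤ e b) := by
  have e1 : e 1 = 0 := by
    have h := hmul 1 1 one_ne_zero one_ne_zero
    simp only [one_mul] at h; linarith
  have eneg1 : e (-1 : K) = 0 := by
    have h := hmul (-1 : K) (-1) (by norm_num) (by norm_num)
    norm_num at h
    linarith
  have eneg : ∀ x : K, x ≠ 0 → e (-x) = e x := by
    intro x hx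
    have h := hmul (-1) x (by norm_num) hx
    rw [neg_one_mul] at h
    rw [h, eneg1]; ring
  have einv : ∀ x : K, x ≠ 0 → e x⁻¹ = - e x := by
    intro x hx
    have h := hmul x x⁻¹ hx (inv_ne_zero hx)
    rw [mul_inv_cancel₀ hx] at h
    linarith
  obtain ⟨k, hk1, rfl⟩ : ∃ k : ℕ, 1 ≤ k ∧ n = (k : ℤ) := ⟨n.toNat, by omega, by omega⟩
  have epown : ∀ j : ℕ, e (ϖ ^ j) = (j : ℤ) := by
    intro j; induction j with
    | zero => simpa using e1
    | succ i ih =>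
      rw [pow_succ, hmul _ _ (pow_ne_zero _ hϖ0) hϖ0, ih, hϖ]; push_cast; ring
  have hw0 : ϖ ^ (-(k : ℤ)) ≠ 0 := zpow_ne_zero _ hϖ0
  have ew : e (ϖ ^ (-(k : ℤ))) = -(k : ℤ) := by
    rw [zpow_neg, zpow_natCast, einv _ (pow_ne_zero _ hϖ0), epown]
  have hzy0 : z * y ≠ 0 := mul_ne_zero hz hy
  have hdetval : g11 * g22 - g12 * g21 = z * (z * y) := by
    subst h11 h12 h21 h22; ring
  have ezy : e (z * y) = e z + e y := hmul z y hz hy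
  have ekey : e z + (e z + e y) = 0 := by
    have h := hmul z (z * y) hz hzy0
    rw [← hdetval, hdet] at h
    linarith
  rcases eq_or_ne b 0 with rfl | hb
  · have hg11 : g11 = z * y := by rw [h11]; ring
    have hg22 : g22 = z := by rw [h22]; ring
    have h1 : 0 ≤ e g11 := (hO g11 (by simp)).resolve_left (by rw [hg11]; exact hzy0)
    have h2 : 0 ≤ e g22 := (hO g22 (by simp)).resolve_left (by rw [hg22]; exact hz)
    rw [hg11, ezy] at h1
    rw [hg22] at h2
    exact ⟨by linarith, by linarith, Or.inl rfl⟩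
  · have hg21 : g21 ≠ 0 := by
      rw [h21]; exact mul_ne_zero hz (mul_ne_zero hb hy)
    have hg21m : m ≤ e g21 := h21m.resolve_left hg21
    have eg21 : e g21 = e z + (e b + e y) := by
      rw [h21, hmul z (b * y) hz (mul_ne_zero hb hy), hmul b y hb hy]
    -- z * y = g11 - α ϖ⁻ⁿ g21
    have hzyge : 0 ≤ e (z * y) := by
      have hc0 : -(α * ϖ ^ (-(k : ℤ))) * g21 ≠ 0 :=
        mul_ne_zero (neg_ne_zero.mpr (mul_ne_zero hα0 hw0)) hg21
      have ec1 : e (-(α * ϖ ^ (-(k : ℤ))) * g21) = -(k : ℤ) + e g21 := by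
        rw [hmul _ _ (neg_ne_zero.mpr (mul_ne_zero hα0 hw0)) hg21,
          eneg _ (mul_ne_zero hα0 hw0), hmul α _ hα0 hw0, hα, ew]; ring
      have hid1 : z * y = g11 + -(α * ϖ ^ (-(k : ℤ))) * g21 := by rw [h11, h21]; ring
      rcases eq_or_ne g11 0 with h0 | h0
      · rw [h0, zero_add] at hid1
        rw [hid1, ec1]; linarith
      · have h11ge : 0 ≤ e g11 := (hO g11 (by simp)).resolve_left h0
        have h := hadd g11 _ h0 hc0 (by rw [← hid1]; exact hzy0)
        rw [← hid1] at h
        have := le_min h11ge (by rw [ec1]; linarith : (0:ℤ) ≤ e (-(α * ϖ ^ (-(k : ℤ))) * g21))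
        linarith [le_trans this h]
    -- z = g22 - β ϖ⁻ⁿ g21
    have hzge : 0 ≤ e z := by
      have hc0 : -(β * ϖ ^ (-(k : ℤ))) * g21 ≠ 0 :=
        mul_ne_zero (neg_ne_zero.mpr (mul_ne_zero hβ0 hw0)) hg21
      have ec1 : e (-(β * ϖ ^ (-(k : ℤ))) * g21) = -(k : ℤ) + e g21 := by
        rw [hmul _ _ (neg_ne_zero.mpr (mul_ne_zero hβ0 hw0)) hg21,
          eneg _ (mul_ne_zero hβ0 hw0), hmul β _ hβ0 hw0, hβ, ew]; ring
      have hid1 : z = g22 + -(β * ϖ ^ (-(k : ℤ))) * g21 := by rw [h22, h21]; ring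
      rcases eq_or_ne g22 0 with h0 | h0
      · rw [h0, zero_add] at hid1
        rw [hid1, ec1]; linarith
      · have h22ge : 0 ≤ e g22 := (hO g22 (by simp)).resolve_left h0
        have h := hadd g22 _ h0 hc0 (by rw [← hid1]; exact hz)
        rw [← hid1] at h
        have := le_min h22ge (by rw [ec1]; linarith : (0:ℤ) ≤ e (-(β * ϖ ^ (-(k : ℤ))) * g21))
        linarith [le_trans this h]
    rw [ezy] at hzyge
    exact ⟨by linarith, by linarith, Or.inr (by linarith)⟩
end

section
/- Let K be a nonarchimedean local field with valuation e and uniformizer ϖ. Let n ≥ 1, k ≥ 1, r₁, r₂ ∈ ℤ, t ∈ K with t ∉ {0,1}, and suppose: (i) 2k + r₂ + e(1−t) = 0; (ii) k + r₁ + r₂ ≥ n; (iii) k + r₂ ≥ 0; (iv) there exist units α, β ∈ O^× such that ϖ^k·[(ϖ^{r₂} + α ϖ^{r₁+r₂−n})·β·ϖ^{−n} + ϖ^{−r₁} t + α ϖ^{−n}] ∈ O. Then e(t) = e(1−t) ≤ −k ≤ −1, and e(t) ≤ r₂ ≤ −e(t) − 2, and n + e(t) + 1 ≤ r₁ ≤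 n. -/
/-- Constraints on the parameters in the regular orbital integral analysis (the case `k ≥ 1`):
the displayed integrality condition forces `e(t) = e(1−t) ≤ −k ≤ −1`,
`e(t) ≤ r₂ ≤ −e(t) − 2`, and `n + e(t) + 1 ≤ r₁ ≤ n`. -/
theorem regular_orbital_constraints (K : Type*) [Field K] (e : K → ℤ)
    (hmul : ∀ x y : K, x ≠ 0 → y ≠ 0 → e (x * y) = e x + e y)
    (hadd : ∀ x y : K, x ≠ 0 → y ≠ 0 → x + y ≠ 0 → min (e x) (e y) ≤ e (x + y))
    (hadd_eq : ∀ x y : K, x ≠ 0 → y ≠ 0 → x + y ≠ 0 → e x ≠ e y →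
      e (x + y) = min (e x) (e y))
    (ϖ : K) (hϖ0 : ϖ ≠ 0) (hϖ : e ϖ = 1)
    (t : K) (ht0 : t ≠ 0) (ht1 : t ≠ 1)
    (n k r₁ r₂ : ℤ) (hn : 1 ≤ n) (hk : 1 ≤ k)
    (h1 : 2 * k + r₂ + e (1 - t) = 0)
    (h2 : n ≤ k + r₁ + r₂)
    (h3 : 0 ≤ k + r₂)
    (h4 : ∃ α β : K, α ≠ 0 ∧ e α = 0 ∧ β ≠ 0 ∧ e β = 0 ∧
      (ϖ ^ k * ((ϖ ^ r₂ + α * ϖ ^ (r₁ + r₂ - n)) * β * ϖ ^ (-n) + ϖ ^ (-r₁) * t + α * ϖ ^ (-n))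
          = 0 ∨
       0 ≤ e (ϖ ^ k * ((ϖ ^ r₂ + α * ϖ ^ (r₁ + r₂ - n)) * β * ϖ ^ (-n) + ϖ ^ (-r₁) * t
          + α * ϖ ^ (-n))))) :
    (e t = e (1 - t) ∧ e t ≤ -k ∧ -k ≤ -1) ∧
    (e t ≤ r₂ ∧ r₂ ≤ -e t - 2) ∧
    (n + e t + 1 ≤ r₁ ∧ r₁ ≤ n) := by
  obtain ⟨α, β, hα0, hαe, hβ0, hβe, hcond⟩ := h4
  -- basic facts about e
  have hone : e 1 = 0 := by
    have := hmul 1 1 one_ne_zero one_ne_zero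
    rw [mul_one] at this; omega
  have hnegone : e (-1 : K) = 0 := by
    have := hmul (-1) (-1) (by norm_num) (by norm_num)
    norm_num at this
    omega
  have hneg : ∀ x : K, x ≠ 0 → e (-x) = e x := by
    intro x hx
    have := hmul (-1) x (by norm_num) hx
    rw [neg_one_mul] at this
    rw [this, hnegone]; ring
  have hsum_ne : ∀ x y : K, x ≠ 0 → e x ≠ e y → x + y ≠ 0 := by
    intro x y hx hxy h
    have hy : y = -x := by linear_combination h
    rw [hy, hneg x hx] at hxy
    exact hxy rfl
  have hpow : ∀ m : ℤ, e (ϖ ^ m) = m := by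
    intro m
    induction m using Int.induction_on with
    | zero => simpa using hone
    | succ i ih =>
      rw [zpow_add_one₀ hϖ0, hmul _ _ (zpow_ne_zero _ hϖ0) hϖ0, ih, hϖ]
    | pred i ih =>
      have h : ϖ ^ (-(i : ℤ) - 1) * ϖ = ϖ ^ (-(i : ℤ)) := by
        rw [← zpow_add_one₀ hϖ0]; ring_nf
      have := hmul (ϖ ^ (-(i : ℤ) - 1)) ϖ (zpow_ne_zero _ hϖ0) hϖ0
      rw [h, ih, hϖ] at this
      omega
  -- e(1-t) < 0
  have hu_lt : e (1 - t) < 0 := by omega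
  have h1t0 : (1 : K) - t ≠ 0 := sub_ne_zero.mpr (Ne.symm ht1)
  have hnt0 : (-t : K) ≠ 0 := neg_ne_zero.mpr ht0
  have h1nt : (1 : K) + -t ≠ 0 := by rw [show (1:K) + -t = 1 - t by ring]; exact h1t0
  -- e t = e (1 - t)
  have het : e t = e (1 - t) := by
    by_cases hv0 : e t = 0
    · exfalso
      have := hadd 1 (-t) one_ne_zero hnt0 h1nt
      rw [show (1:K) + -t = 1 - t by ring, hone, hneg t ht0, hv0] at this
      omega
    · have := hadd_eq 1 (-t) one_ne_zero hnt0 h1nt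
        (by rw [hone, hneg t ht0]; exact fun h => hv0 h.symm)
      rw [show (1:K) + -t = 1 - t by ring, hone, hneg t ht0] at this
      omega
  -- abbreviate v
  set v := e t with hv
  -- the only nontrivial part: r₁ ≤ n
  have hr₁n : r₁ ≤ n := by
    by_contra hr
    push_neg at hr
    -- P = ϖ^r₂ + α ϖ^(r₁+r₂-n)
    have hx1 : (ϖ ^ r₂ : K) ≠ 0 := zpow_ne_zero _ hϖ0
    have hx2 : (α * ϖ ^ (r₁ + r₂ - n) : K) ≠ 0 := mul_ne_zero hα0 (zpow_ne_zero _ hϖ0)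
    have hex2 : e (α * ϖ ^ (r₁ + r₂ - n)) = r₁ + r₂ - n := by
      rw [hmul _ _ hα0 (zpow_ne_zero _ hϖ0), hαe, hpow]; ring
    have hexne : e (ϖ ^ r₂ : K) ≠ e (α * ϖ ^ (r₁ + r₂ - n)) := by
      rw [hpow, hex2]; omega
    have hP0 : (ϖ ^ r₂ + α * ϖ ^ (r₁ + r₂ - n) : K) ≠ 0 := hsum_ne _ _ hx1 hexne
    have heP : e (ϖ ^ r₂ + α * ϖ ^ (r₁ + r₂ - n) : K) = min r₂ (r₁ + r₂ - n) := by
      rw [hadd_eq _ _ hx1 hx2 hP0 hexne, hpow, hex2]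
    -- S = P * β * ϖ^(-n)
    have hS0 : ((ϖ ^ r₂ + α * ϖ ^ (r₁ + r₂ - n)) * β * ϖ ^ (-n) : K) ≠ 0 :=
      mul_ne_zero (mul_ne_zero hP0 hβ0) (zpow_ne_zero _ hϖ0)
    have heS : e ((ϖ ^ r₂ + α * ϖ ^ (r₁ + r₂ - n)) * β * ϖ ^ (-n) : K)
        = min r₂ (r₁ + r₂ - n) - n := by
      rw [hmul _ _ (mul_ne_zero hP0 hβ0) (zpow_ne_zero _ hϖ0),
        hmul _ _ hP0 hβ0, heP, hβe, hpow]; ring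
    -- C = ϖ^(-r₁) * t
    have hC0 : (ϖ ^ (-r₁) * t : K) ≠ 0 := mul_ne_zero (zpow_ne_zero _ hϖ0) ht0
    have heC : e (ϖ ^ (-r₁) * t : K) = v - r₁ := by
      rw [hmul _ _ (zpow_ne_zero _ hϖ0) ht0, hpow]; ring
    -- v ≤ r₂ (needed for strict comparison)
    have hvr₂ : v ≤ r₂ := by omega
    -- e C < e S
    have hCS : e (ϖ ^ (-r₁) * t : K) ≠ e ((ϖ ^ r₂ + α * ϖ ^ (r₁ + r₂ - n)) * β * ϖ ^ (-n) : K) := by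
      rw [heC, heS]; omega
    have hSC0 : ((ϖ ^ r₂ + α * ϖ ^ (r₁ + r₂ - n)) * β * ϖ ^ (-n) + ϖ ^ (-r₁) * t : K) ≠ 0 := by
      have := hsum_ne _ _ hC0 hCS
      rw [add_comm] at this; exact this
    have heSC : e ((ϖ ^ r₂ + α * ϖ ^ (r₁ + r₂ - n)) * β * ϖ ^ (-n) + ϖ ^ (-r₁) * t : K)
        = v - r₁ := by
      rw [hadd_eq _ _ hS0 hC0 hSC0 (Ne.symm hCS), heC, heS]
      omega
    -- D = α * ϖ^(-n)
    have hD0 : (α * ϖ ^ (-n) : K) ≠ 0 := mul_ne_zero hα0 (zpow_ne_zero _ hϖ0)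
    have heD : e (α * ϖ ^ (-n) : K) = -n := by
      rw [hmul _ _ hα0 (zpow_ne_zero _ hϖ0), hαe, hpow]; ring
    have hXne : e ((ϖ ^ r₂ + α * ϖ ^ (r₁ + r₂ - n)) * β * ϖ ^ (-n) + ϖ ^ (-r₁) * t : K)
        ≠ e (α * ϖ ^ (-n) : K) := by
      rw [heSC, heD]; omega
    have hX0 : ((ϖ ^ r₂ + α * ϖ ^ (r₁ + r₂ - n)) * β * ϖ ^ (-n) + ϖ ^ (-r₁) * t
        + α * ϖ ^ (-n) : K) ≠ 0 := hsum_ne _ _ hSC0 hXne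
    have heX : e ((ϖ ^ r₂ + α * ϖ ^ (r₁ + r₂ - n)) * β * ϖ ^ (-n) + ϖ ^ (-r₁) * t
        + α * ϖ ^ (-n) : K) = v - r₁ := by
      rw [hadd_eq _ _ hSC0 hD0 hX0 hXne, heSC, heD]
      omega
    rcases hcond with hzero | hge
    · exact (mul_ne_zero (zpow_ne_zero _ hϖ0) hX0) hzero
    · rw [hmul _ _ (zpow_ne_zero _ hϖ0) hX0, hpow, heX] at hge
      omega
  refine ⟨⟨het, by omega, by omega⟩, ⟨by omega, by omega⟩, ⟨by omega, hr₁n⟩⟩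
end
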